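/- For every nonempty class F of sequential experts, every t ∈ {0,…,T}, and all sequences x_{1:t} ∈ X^t, y_{1:t} ∈ Y^t, the value-to-go dominates the dual value-to-go: G(F, x_{1:t}, y_{1:t}) ≥ W(F, x_{1:t}, y_{1:t}). Moreover, if for every continuation x_{t+1:T} ∈ X^{T−t}, y_{t+1:T} ∈ Y^{T−t} one has inf_{f ∈ F} Σ_{s=1}^T ℓ(f(x_{1:s}, y_{1:s-1}), y_s) < ∞, then G(F, x_{1:t}, y_{1:t}) = W(F, x_{1:t}, y_{1:t}). -/

import Mathlib

open scoped BigOperators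

/-- The probability simplex on a finite label set `Y`. -/
abbrev Simplex (Y : Type*) [Fintype Y] :=
  {p : Y → ℝ // (∀ y, 0 ≤ p y) ∧ ∑ y, p y = 1}

/-- A sequential expert: given contexts `x₁,…,x_t` (a list of length `t`) and past labels
`y₁,…,y_{t-1}` (a list of length `t-1`), it predicts a distribution over labels. -/
abbrev Expert (X Y : Type*) [Fintype Y] := List X → List Y → Simplex Y

/-- `-log x` as an extended real, with `-log 0 = ⊤` (and junk value `⊤` for `x < 0`). -/
noncomputable def negLog (x : ℝ) : EReal :=
  if x ≤ 0 then ⊤ else ((-Real.log x : ℝ) : EReal)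

/-- `log x` as an extended real, with `log 0 = ⊥` (and junk value `⊥` for `x < 0`). -/
noncomputable def elog (x : ℝ) : EReal :=
  if x ≤ 0 then ⊥ else ((Real.log x : ℝ) : EReal)

/-- The logarithmic loss `ℓ(p, y) = -log p(y) ∈ [0, ∞]`. -/
noncomputable def logloss {Y : Type*} [Fintype Y] (p : Simplex Y) (y : Y) : EReal :=
  negLog (p.1 y)

/-- Likelihood of expert `f` on a context sequence `xs` and a label sequence `ys`
of the same length: `L(f; y_{1:d} | x_{1:d}) = ∏_{t=1}^d f(x_{1:t}, y_{1:t-1})(y_t)`. -/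
noncomputable def likelihood {X Y : Type*} [Fintype Y] [Inhabited Y]
    (f : Expert X Y) (xs : List X) (ys : List Y) : ℝ :=
  ∏ t ∈ Finset.range ys.length, (f (xs.take (t + 1)) (ys.take t)).1 (ys.getD t default)

/-- Cumulative log loss of expert `f` on `xs`, `ys`:
`Σ_{t=1}^d ℓ(f(x_{1:t}, y_{1:t-1}), y_t)`. -/
noncomputable def cumLoss {X Y : Type*} [Fintype Y] [Inhabited Y]
    (f : Expert X Y) (xs : List X) (ys : List Y) : EReal :=
  ∑ t ∈ Finset.range ys.length, logloss (f (xs.take (t + 1)) (ys.take t)) (ys.getD t default)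

/-- A context tree of depth `T` is modelled as a map `χ : List Y → X` (only its values on
lists of length `< T` matter): `x_t(y) = χ (y_{1:t-1})`.  `treePath χ ys` is the context
sequence `x(y) = (x_1, x_2(y_1), …)` obtained by tracing the tree along the path `ys`. -/
def treePath {X Y : Type*} (χ : List Y → X) (ys : List Y) : List X :=
  (List.range ys.length).map fun t => χ (ys.take t)

/-- The contextual Shtarkov sum of `F` on a context tree `χ` of depth `r`, with prefix
`xs ∈ X^t`, `ys ∈ Y^t`:
`S_T(F, χ | x_{1:t}, y_{1:t}) = Σ_{y ∈ Y^r} sup_{f ∈ F} L(f; (y_{1:t}, y) | (x_{1:t}, χ(y)))`. -/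
noncomputable def shtarkovPrefix {X Y : Type*} [Fintype Y] [Inhabited Y]
    (F : Set (Expert X Y)) (r : ℕ) (χ : List Y → X) (xs : List X) (ys : List Y) : ℝ :=
  ∑ y : Fin r → Y, ⨆ f : F,
    likelihood (f : Expert X Y) (xs ++ treePath χ (List.ofFn y)) (ys ++ List.ofFn y)

/-- The contextual Shtarkov sum `S_T(F | χ) = Σ_{y ∈ Y^T} sup_{f ∈ F} L(f; y | χ(y))`. -/
noncomputable def shtarkov {X Y : Type*} [Fintype Y] [Inhabited Y]
    (F : Set (Expert X Y)) (T : ℕ) (χ : List Y → X) : ℝ :=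
  shtarkovPrefix F T χ [] []

/-- The extensive-form game value with `r` rounds to go, given past contexts `xs`, past
labels `ys`, and accumulated learner loss `acc`:
`sup_{x} inf_{p̂} sup_{y} ⋯ [ acc + Σ ℓ(p̂_s, y_s) − inf_{f ∈ F} Σ_{s=1}^T ℓ(f, y_s) ]`. -/
noncomputable def valToGo {X Y : Type*} [Fintype Y] [Inhabited Y]
    (F : Set (Expert X Y)) : ℕ → List X → List Y → EReal → EReal
  | 0, xs, ys, acc => acc - ⨅ f : F, cumLoss (f : Expert X Y) xs ys
  | r + 1, xs, ys, acc =>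
      ⨆ x : X, ⨅ p : Simplex Y, ⨆ y : Y,
        valToGo F r (xs ++ [x]) (ys ++ [y]) (acc + logloss p y)

/-- The minimax regret
`R_T(F) = sup_{x_1} inf_{p̂_1} sup_{y_1} ⋯ sup_{x_T} inf_{p̂_T} sup_{y_T} R_T(F; p̂, x, y)`. -/
noncomputable def minimaxRegret {X Y : Type*} [Fintype Y] [Inhabited Y]
    (F : Set (Expert X Y)) (T : ℕ) : EReal :=
  valToGo F T [] [] 0

/-- Nested conditional expectation over a probabilistic tree `π`, for `r` remaining rounds:
`E_{y_1 ∼ π([])} E_{y_2 ∼ π(y_{1:1})} ⋯ [g(y_{1:r})]`. -/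
noncomputable def expTree {Y : Type*} [Fintype Y] (π : List Y → Simplex Y)
    (g : List Y → EReal) : ℕ → List Y → EReal
  | 0, pre => g pre
  | r + 1, pre => ∑ y : Y, ((π pre).1 y : EReal) * expTree π g r (pre ++ [y])

/-- The dual (max-min) value-to-go `W(F, x_{1:t}, y_{1:t})`: the supremum over context trees
`χ` and probabilistic trees `π` of depth `r = T - t` of
`E_{y∼π}[ Σ_{s=t+1}^T ℓ(π_s(y), y_s) − inf_{f ∈ F} Σ_{s=1}^T ℓ(f, y_s) ]`. -/
noncomputable def dualValToGo {X Y : Type*} [Fintype Y] [Inhabited Y]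
    (F : Set (Expert X Y)) (r : ℕ) (xs : List X) (ys : List Y) : EReal :=
  ⨆ χ : List Y → X, ⨆ π : List Y → Simplex Y,
    expTree π (fun suf =>
      (∑ s ∈ Finset.range r, logloss (π (suf.take s)) (suf.getD s default)) -
        ⨅ f : F, cumLoss (f : Expert X Y) (xs ++ treePath χ suf) (ys ++ suf)) r []

/-- The dual (max-min) value `V_T(F)`. -/
noncomputable def dualValue {X Y : Type*} [Fintype Y] [Inhabited Y]
    (F : Set (Expert X Y)) (T : ℕ) : EReal :=
  dualValToGo F T [] []


/-!
Both values are governed by the contextual Shtarkov sum `S(χ)` of a context tree `χ`.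
In the game, the adversary follows `χ` and, against any forecast `p`, picks a label `y` with
`p(y) · S ≤ S_y` (pigeonhole over the subtrees), so `G ≥ log S(χ)`; the learner answers every
context with the normalized maximum likelihood forecast `p(y) ∝ sup_χ S_y(χ)`, which equalizes
the regret over labels, so `G ≤ log sup_χ S(χ)`. On the dual side, Gibbs' inequality bounds the
payoff of every probabilistic tree by `log S(χ)`. When every continuation has positive maximal
likelihood, the NML tree `π(y | pre) = S(pre ++ [y]) / S(pre)` attains this bound: along every
path, the accumulated loss plus the log-mass of the current subtree stays equal to `log S(χ)`.
-/

open scoped ENNReal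

lemma EReal.coe_finsetSum {ι : Type*} (s : Finset ι) (f : ι → ℝ) :
    ((∑ i ∈ s, f i : ℝ) : EReal) = ∑ i ∈ s, (f i : EReal) :=
  map_sum (⟨⟨Real.toEReal, EReal.coe_zero⟩, EReal.coe_add⟩ : ℝ →+ EReal) f s

lemma EReal.sum_coe_mul_of_nonneg {ι : Type*} (s : Finset ι) {a : ι → ℝ}
    (ha : ∀ i ∈ s, 0 ≤ a i) (c : EReal) :
    ∑ i ∈ s, (a i : EReal) * c = ((∑ i ∈ s, a i : ℝ) : EReal) * c := by
  induction s using Finset.cons_induction with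
  | empty => simp
  | cons i s hi ih =>
    rw [Finset.sum_cons, Finset.sum_cons, EReal.coe_add,
      EReal.right_distrib_of_nonneg (EReal.coe_nonneg.2 (ha i (Finset.mem_cons_self i s)))
        (EReal.coe_nonneg.2 (Finset.sum_nonneg fun j hj => ha j (Finset.mem_cons_of_mem hj))),
      ih fun j hj => ha j (Finset.mem_cons_of_mem hj)]

lemma ENNReal.log_prod {ι : Type*} (s : Finset ι) (f : ι → ℝ≥0∞) :
    ENNReal.log (∏ i ∈ s, f i) = ∑ i ∈ s, ENNReal.log (f i) := by
  induction s using Finset.cons_induction with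
  | empty => simp
  | cons i s hi ih => rw [Finset.prod_cons, Finset.sum_cons, ENNReal.log_mul_add, ih]

lemma ENNReal.sum_iSup_le_iSup_sum {ι κ : Type*} (s : Finset ι) (f : ι → κ → ℝ≥0∞) :
    ∑ i ∈ s, ⨆ c, f i c ≤ ⨆ g : ι → κ, ∑ i ∈ s, f i (g i) := by
  classical
  calc ∑ i ∈ s, ⨆ c, f i c ≤ ∑ i ∈ s, ⨆ g : ι → κ, f i (g i) :=
        Finset.sum_le_sum fun i _ => iSup_le fun c => le_iSup_of_le (fun _ => c) le_rfl
    _ = ⨆ g : ι → κ, ∑ i ∈ s, f i (g i) := by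
        refine ENNReal.finsetSum_iSup fun g₁ g₂ =>
          ⟨fun i => if f i (g₁ i) ≤ f i (g₂ i) then g₂ i else g₁ i, fun i => ?_⟩
        dsimp only
        split_ifs with h
        · exact ⟨h, le_rfl⟩
        · exact ⟨le_rfl, (not_le.1 h).le⟩

lemma Real.sum_mul_log_div_le_log_sum {ι : Type*} (s : Finset ι) {w a : ι → ℝ}
    (hw : ∀ i ∈ s, 0 ≤ w i) (hw1 : ∑ i ∈ s, w i = 1) (ha : ∀ i ∈ s, 0 ≤ a i)
    (hwa : ∀ i ∈ s, 0 < w i → 0 < a i) :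
    ∑ i ∈ s, w i * Real.log (a i / w i) ≤ Real.log (∑ i ∈ s, a i) := by
  classical
  set t := s.filter fun i => 0 < w i
  have hpos : ∀ i ∈ s, w i ≠ 0 → 0 < w i := fun i hi h => (hw i hi).lt_of_ne' h
  have hwt : ∑ i ∈ t, w i = 1 := by rw [Finset.sum_filter_of_ne hpos, hw1]
  have hjensen := strictConcaveOn_log_Ioi.concaveOn.le_map_sum (t := t) (p := fun i => a i / w i)
    (fun i hi => (Finset.mem_filter.1 hi).2.le) hwt fun i hi => by
      obtain ⟨his, hwi⟩ := Finset.mem_filter.1 hi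
      exact div_pos (hwa i his hwi) hwi
  have hcancel : ∑ i ∈ t, w i • (a i / w i) = ∑ i ∈ t, a i :=
    Finset.sum_congr rfl fun i hi => mul_div_cancel₀ _ (Finset.mem_filter.1 hi).2.ne'
  have ht : 0 < ∑ i ∈ t, a i := by
    obtain ⟨i, hi, -⟩ := Finset.exists_ne_zero_of_sum_ne_zero (hwt.trans_ne one_ne_zero)
    obtain ⟨his, hwi⟩ := Finset.mem_filter.1 hi
    exact Finset.sum_pos' (fun j hj => ha j (Finset.mem_filter.1 hj).1) ⟨i, hi, hwa i his hwi⟩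
  calc ∑ i ∈ s, w i * Real.log (a i / w i) = ∑ i ∈ t, w i • Real.log (a i / w i) := by
        refine (Finset.sum_filter_of_ne fun i hi h => hpos i hi ?_).symm
        rintro hw0
        simp [hw0] at h
    _ ≤ Real.log (∑ i ∈ t, a i) := hjensen.trans_eq (by rw [hcancel])
    _ ≤ Real.log (∑ i ∈ s, a i) := Real.log_le_log ht <|
        Finset.sum_le_sum_of_subset_of_nonneg (Finset.filter_subset _ _) fun i hi _ => ha i hi

lemma negLog_eq_log_inv (x : ℝ) : negLog x = ENNReal.log (ENNReal.ofReal x)⁻¹ := by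
  rw [ENNReal.log_inv, ENNReal.log_ofReal, negLog]
  split_ifs <;> simp

section Simplex

variable {Y : Type*} [Fintype Y]

lemma Simplex.apply_le_one (p : Simplex Y) (y : Y) : p.1 y ≤ 1 :=
  (Finset.single_le_sum (fun z _ => p.2.1 z) (Finset.mem_univ y)).trans_eq p.2.2

lemma Simplex.exists_pos (p : Simplex Y) : ∃ y, 0 < p.1 y := by
  obtain ⟨y, -, hy⟩ := Finset.exists_ne_zero_of_sum_ne_zero (p.2.2.trans_ne one_ne_zero)
  exact ⟨y, (p.2.1 y).lt_of_ne' hy⟩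

lemma Simplex.sum_coe_mul_const (p : Simplex Y) (c : EReal) : ∑ y, (p.1 y : EReal) * c = c := by
  rw [EReal.sum_coe_mul_of_nonneg _ (fun y _ => p.2.1 y), p.2.2, EReal.coe_one, one_mul]

lemma logloss_add_log (p : Simplex Y) (y : Y) (a : ℝ≥0∞) :
    logloss p y + ENNReal.log a = ENNReal.log (a / ENNReal.ofReal (p.1 y)) := by
  rw [logloss, negLog_eq_log_inv, ← ENNReal.log_mul_add, mul_comm, div_eq_mul_inv]

lemma Simplex.sum_mul_log_div_le_log_sum (w : Simplex Y) (S : Y → ℝ≥0∞) :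
    ∑ y, (w.1 y : EReal) * ENNReal.log (S y / ENNReal.ofReal (w.1 y))
      ≤ ENNReal.log (∑ y, S y) := by
  by_cases htop : ∑ y, S y = ⊤
  · simp [htop]
  have hS : ∀ y, S y ≠ ⊤ := fun y => ENNReal.sum_ne_top.1 htop y (Finset.mem_univ y)
  by_cases hzero : ∃ y, 0 < w.1 y ∧ S y = 0
  · obtain ⟨y, hwy, hSy⟩ := hzero
    classical
    rw [← Finset.add_sum_erase _ _ (Finset.mem_univ y), hSy, ENNReal.zero_div, ENNReal.log_zero,
      EReal.coe_mul_bot_of_pos hwy, EReal.bot_add]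
    exact bot_le
  push Not at hzero
  have hterm : ∀ y, (w.1 y : EReal) * ENNReal.log (S y / ENNReal.ofReal (w.1 y))
      = ((w.1 y * Real.log ((S y).toReal / w.1 y) : ℝ) : EReal) := by
    intro y
    rcases (w.2.1 y).eq_or_lt with hw0 | hwy
    · simp [← hw0]
    · rw [ENNReal.log_pos_real (by simp [hzero y hwy]) (by simp [ENNReal.div_eq_top, hS y, hwy]),
        ENNReal.toReal_div, ENNReal.toReal_ofReal hwy.le, EReal.coe_mul]
  obtain ⟨y, hwy⟩ := w.exists_pos
  have hsum : ∑ y, S y ≠ 0 := fun h =>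
    hzero y hwy (Finset.sum_eq_zero_iff.1 h y (Finset.mem_univ y))
  rw [Finset.sum_congr rfl fun y _ => hterm y, ← EReal.coe_finsetSum,
    ENNReal.log_pos_real hsum htop, ENNReal.toReal_sum fun y _ => hS y, EReal.coe_le_coe_iff]
  exact Real.sum_mul_log_div_le_log_sum _ (fun y _ => w.2.1 y) w.2.2
    (fun _ _ => ENNReal.toReal_nonneg) fun y _ hy => ENNReal.toReal_pos (hzero y hy) (hS y)

lemma sum_mul_add_logloss_add_log_le (w : Simplex Y) (S : Y → ℝ≥0∞) (C : EReal) :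
    ∑ y, (w.1 y : EReal) * (C + logloss w y + ENNReal.log (S y))
      ≤ C + ENNReal.log (∑ y, S y) := by
  simp_rw [add_assoc, logloss_add_log, EReal.left_distrib_of_nonneg_of_ne_top
    (EReal.coe_nonneg.2 (w.2.1 _)) (EReal.coe_ne_top _), Finset.sum_add_distrib,
    Simplex.sum_coe_mul_const]
  exact add_le_add le_rfl (Simplex.sum_mul_log_div_le_log_sum w S)

lemma exists_log_sum_le_logloss_add_log [Nonempty Y] (p : Simplex Y) (A : Y → ℝ≥0∞) :
    ∃ y, ENNReal.log (∑ z, A z) ≤ logloss p y + ENNReal.log (A y) := by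
  classical
  simp_rw [logloss_add_log]
  set s := Finset.univ.filter fun y => A y ≠ 0
  rcases s.eq_empty_or_nonempty with hs | hs
  · obtain ⟨y⟩ := ‹Nonempty Y›
    refine ⟨y, ?_⟩
    have hA : ∀ z, A z = 0 := fun z =>
      not_not.1 (Finset.filter_eq_empty_iff.1 hs (Finset.mem_univ z))
    simp [hA]
  have hmass : ∑ y ∈ s, ENNReal.ofReal (p.1 y) ≤ 1 := by
    calc ∑ y ∈ s, ENNReal.ofReal (p.1 y) ≤ ∑ y, ENNReal.ofReal (p.1 y) :=
          Finset.sum_le_sum_of_subset (Finset.filter_subset _ _)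
      _ = 1 := by
          rw [← ENNReal.ofReal_sum_of_nonneg fun y _ => p.2.1 y, p.2.2, ENNReal.ofReal_one]
  have hle : ∑ y ∈ s, ENNReal.ofReal (p.1 y) * ∑ z, A z ≤ ∑ y ∈ s, A y := by
    rw [← Finset.sum_mul, Finset.sum_filter_ne_zero]
    exact (mul_le_mul_left hmass _).trans_eq (one_mul _)
  obtain ⟨y, hys, hy⟩ := ENNReal.exists_le_of_sum_le hs hle
  refine ⟨y, ENNReal.log_le_log ?_⟩
  rwa [ENNReal.le_div_iff_mul_le (Or.inr (Finset.mem_filter.1 hys).2)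
    (Or.inl ENNReal.ofReal_ne_top), mul_comm]

noncomputable def Simplex.uniform (Y : Type*) [Fintype Y] [Nonempty Y] : Simplex Y :=
  ⟨fun _ => (Fintype.card Y : ℝ)⁻¹, fun _ => by positivity, by
    rw [Finset.sum_const, Finset.card_univ, nsmul_eq_mul,
      mul_inv_cancel₀ (Nat.cast_ne_zero.2 Fintype.card_ne_zero)]⟩

noncomputable def Simplex.normalize [Nonempty Y] (A : Y → ℝ≥0∞) : Simplex Y :=
  if h : 0 < ∑ y, (A y).toReal then
    ⟨fun y => (A y).toReal / ∑ z, (A z).toReal, fun _ => by positivity,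
      by rw [← Finset.sum_div, div_self h.ne']⟩
  else Simplex.uniform Y

lemma logloss_normalize_add_log [Nonempty Y] {A : Y → ℝ≥0∞} {y : Y} (hy : A y ≠ 0)
    (hA : ∑ z, A z ≠ ⊤) :
    logloss (Simplex.normalize A) y + ENNReal.log (A y) = ENNReal.log (∑ z, A z) := by
  have hfin : ∀ z, A z ≠ ⊤ := fun z => ENNReal.sum_ne_top.1 hA z (Finset.mem_univ z)
  have hsum : ∑ z, (A z).toReal = (∑ z, A z).toReal :=
    (ENNReal.toReal_sum fun z _ => hfin z).symm
  have h0 : ∑ z, A z ≠ 0 := fun h => hy (Finset.sum_eq_zero_iff.1 h y (Finset.mem_univ y))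
  have hnorm : ENNReal.ofReal ((Simplex.normalize A).1 y) = A y / ∑ z, A z := by
    rw [Simplex.normalize, dif_pos (hsum ▸ ENNReal.toReal_pos h0 hA)]
    show ENNReal.ofReal ((A y).toReal / ∑ z, (A z).toReal) = _
    rw [hsum, ← ENNReal.toReal_div, ENNReal.ofReal_toReal (ENNReal.div_ne_top (hfin y) h0)]
  rw [logloss_add_log, hnorm, ENNReal.div_div_cancel hy (hfin y)]

lemma logloss_normalize_add_log_le [Nonempty Y] (A : Y → ℝ≥0∞) (y : Y) :
    logloss (Simplex.normalize A) y + ENNReal.log (A y) ≤ ENNReal.log (∑ z, A z) := by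
  -- `A y = 0` makes the loss `⊤`, but `⊤ + ⊥ = ⊥` in `EReal`
  by_cases hy : A y = 0
  · simp [hy]
  by_cases hA : ∑ z, A z = ⊤
  · simp [hA]
  exact (logloss_normalize_add_log hy hA).le

end Simplex

section Game

variable {X Y : Type*}

lemma treePath_cons (χ : List Y → X) (y : Y) (l : List Y) :
    treePath χ (y :: l) = χ [] :: treePath (fun m => χ (y :: m)) l := by
  simp [treePath, List.range_succ_eq_map, List.map_map, Function.comp_def, List.take_succ_cons]

variable [Fintype Y]

lemma expTree_eq_of_forall_length_eq (π : List Y → Simplex Y) (g : List Y → EReal)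
    {c : EReal} :
    ∀ (k : ℕ) (pre : List Y), (∀ l : List Y, l.length = k → g (pre ++ l) = c) →
      expTree π g k pre = c
  | 0, pre, h => by simpa [expTree] using h [] rfl
  | k + 1, pre, h => by
    have hchild : ∀ y, expTree π g k (pre ++ [y]) = c := fun y =>
      expTree_eq_of_forall_length_eq π g k _ fun l hl => by simpa using h (y :: l) (by simp [hl])
    simp only [expTree, hchild, Simplex.sum_coe_mul_const]

variable [Inhabited Y]

noncomputable def maxLik (F : Set (Expert X Y)) (xs : List X) (ys : List Y) : ℝ≥0∞ :=
  ⨆ f : F, ENNReal.ofReal (likelihood (f : Expert X Y) xs ys)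

lemma maxLik_le_one (F : Set (Expert X Y)) (xs : List X) (ys : List Y) : maxLik F xs ys ≤ 1 :=
  iSup_le fun f => ENNReal.ofReal_le_one.2 <|
    Finset.prod_le_one (fun _ _ => (f.1 _ _).2.1 _) fun _ _ => Simplex.apply_le_one _ _

lemma cumLoss_eq_log_inv (f : Expert X Y) (xs : List X) (ys : List Y) :
    cumLoss f xs ys = ENNReal.log (ENNReal.ofReal (likelihood f xs ys))⁻¹ := by
  rw [likelihood, ENNReal.ofReal_prod_of_nonneg fun _ _ => (f _ _).2.1 _,
    ENNReal.prod_inv_distrib fun _ _ _ _ _ => Or.inr ENNReal.ofReal_ne_top, ENNReal.log_prod]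
  exact Finset.sum_congr rfl fun _ _ => negLog_eq_log_inv _

lemma iInf_cumLoss_eq_neg_log_maxLik (F : Set (Expert X Y)) (xs : List X) (ys : List Y) :
    ⨅ f : F, cumLoss (f : Expert X Y) xs ys = -ENNReal.log (maxLik F xs ys) := by
  simp_rw [cumLoss_eq_log_inv, maxLik, ← ENNReal.log_inv, ENNReal.inv_iSup,
    ← ENNReal.logOrderIso_apply, OrderIso.map_iInf]

lemma sub_iInf_cumLoss (F : Set (Expert X Y)) (xs : List X) (ys : List Y) (a : EReal) :
    a - ⨅ f : F, cumLoss (f : Expert X Y) xs ys = a + ENNReal.log (maxLik F xs ys) := by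
  rw [iInf_cumLoss_eq_neg_log_maxLik, sub_eq_add_neg, neg_neg]

/-- `shtarkovMass F χ xs ys r []` is the Shtarkov sum `shtarkovPrefix F r χ xs ys`, computed
in `ℝ≥0∞` by recursion over the tree; `shtarkovMass F χ xs ys k pre` is the same sum for the
subtree rooted at the node `pre`, `k` levels deep. -/
noncomputable def shtarkovMass (F : Set (Expert X Y)) (χ : List Y → X) (xs : List X)
    (ys : List Y) : ℕ → List Y → ℝ≥0∞
  | 0, pre => maxLik F (xs ++ treePath χ pre) (ys ++ pre)
  | k + 1, pre => ∑ y, shtarkovMass F χ xs ys k (pre ++ [y])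

section ShtarkovMass

variable (F : Set (Expert X Y)) (χ : List Y → X) (xs : List X) (ys : List Y)

lemma shtarkovMass_ne_top : ∀ (k : ℕ) (pre : List Y), shtarkovMass F χ xs ys k pre ≠ ⊤
  | 0, _ => ne_top_of_le_ne_top ENNReal.one_ne_top (maxLik_le_one _ _ _)
  | k + 1, _ => ENNReal.sum_ne_top.2 fun _ _ => shtarkovMass_ne_top k _

lemma shtarkovMass_ne_zero {k : ℕ} {pre : List Y}
    (h : ∀ l : List Y, l.length = k →
      maxLik F (xs ++ treePath χ (pre ++ l)) (ys ++ (pre ++ l)) ≠ 0) :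
    shtarkovMass F χ xs ys k pre ≠ 0 := by
  induction k generalizing pre with
  | zero => simpa [shtarkovMass] using h [] rfl
  | succ k ih =>
    have hchild := ih (pre := pre ++ [default]) fun l hl => by
      simpa using h (default :: l) (by simp [hl])
    exact fun h0 => hchild (Finset.sum_eq_zero_iff.1 h0 default (Finset.mem_univ _))

lemma shtarkovMass_cons (y : Y) : ∀ (k : ℕ) (pre : List Y),
    shtarkovMass F χ xs ys k (y :: pre)
      = shtarkovMass F (fun l => χ (y :: l)) (xs ++ [χ []]) (ys ++ [y]) k pre
  | 0, pre => by simp [shtarkovMass, treePath_cons]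
  | k + 1, pre => Finset.sum_congr rfl fun z _ => shtarkovMass_cons y k (pre ++ [z])

lemma shtarkovMass_succ_nil (k : ℕ) :
    shtarkovMass F χ xs ys (k + 1) []
      = ∑ y, shtarkovMass F (fun l => χ (y :: l)) (xs ++ [χ []]) (ys ++ [y]) k [] :=
  Finset.sum_congr rfl fun y _ => shtarkovMass_cons F χ xs ys y k []

end ShtarkovMass

lemma add_log_shtarkovMass_le_valToGo (F : Set (Expert X Y)) :
    ∀ (r : ℕ) (χ : List Y → X) (xs : List X) (ys : List Y) (acc : EReal),
      acc + ENNReal.log (shtarkovMass F χ xs ys r []) ≤ valToGo F r xs ys acc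
  | 0, χ, xs, ys, acc => by simp [shtarkovMass, valToGo, sub_iInf_cumLoss, treePath]
  | r + 1, χ, xs, ys, acc => by
    rw [valToGo]
    refine le_iSup_of_le (χ []) (le_iInf fun p => ?_)
    obtain ⟨y, hy⟩ := exists_log_sum_le_logloss_add_log p fun y =>
      shtarkovMass F (fun l => χ (y :: l)) (xs ++ [χ []]) (ys ++ [y]) r []
    refine le_iSup_of_le y ?_
    calc acc + ENNReal.log (shtarkovMass F χ xs ys (r + 1) [])
        ≤ acc + logloss p y + ENNReal.log
            (shtarkovMass F (fun l => χ (y :: l)) (xs ++ [χ []]) (ys ++ [y]) r []) := by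
          rw [shtarkovMass_succ_nil, add_assoc]
          exact add_le_add le_rfl hy
      _ ≤ _ := add_log_shtarkovMass_le_valToGo F r _ _ _ _

lemma valToGo_le_add_log_iSup_shtarkovMass [Nonempty X] (F : Set (Expert X Y)) :
    ∀ (r : ℕ) (xs : List X) (ys : List Y) (acc : EReal),
      valToGo F r xs ys acc ≤ acc + ENNReal.log (⨆ χ, shtarkovMass F χ xs ys r [])
  | 0, xs, ys, acc => by
    obtain ⟨x⟩ := ‹Nonempty X›
    rw [valToGo, sub_iInf_cumLoss]
    exact add_le_add le_rfl <| ENNReal.log_le_log <|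
      le_iSup_of_le (fun _ => x) (by simp [shtarkovMass, treePath])
  | r + 1, xs, ys, acc => by
    rw [valToGo]
    refine iSup_le fun x => ?_
    set A : Y → ℝ≥0∞ := fun y => ⨆ χ, shtarkovMass F χ (xs ++ [x]) (ys ++ [y]) r []
    have hA : ∑ y, A y ≤ ⨆ χ, shtarkovMass F χ xs ys (r + 1) [] := by
      refine (ENNReal.sum_iSup_le_iSup_sum _ _).trans (iSup_le fun g => ?_)
      refine le_iSup_of_le (fun | [] => x | y :: l => g y l) ?_
      rw [shtarkovMass_succ_nil]
    refine iInf_le_of_le (Simplex.normalize A) (iSup_le fun y => ?_)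
    calc valToGo F r (xs ++ [x]) (ys ++ [y]) (acc + logloss (Simplex.normalize A) y)
        ≤ acc + logloss (Simplex.normalize A) y + ENNReal.log (A y) :=
          valToGo_le_add_log_iSup_shtarkovMass F r _ _ _
      _ ≤ acc + ENNReal.log (∑ y, A y) := by
          rw [add_assoc]
          exact add_le_add le_rfl (logloss_normalize_add_log_le A y)
      _ ≤ _ := add_le_add le_rfl (ENNReal.log_le_log hA)

end Game

section Dual

variable {X Y : Type*} [Fintype Y] [Inhabited Y]

noncomputable def pathLoss (π : List Y → Simplex Y) (l : List Y) : EReal :=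
  ∑ s ∈ Finset.range l.length, logloss (π (l.take s)) (l.getD s default)

@[simp] lemma pathLoss_nil (π : List Y → Simplex Y) : pathLoss π [] = 0 := by simp [pathLoss]

lemma pathLoss_concat (π : List Y → Simplex Y) (l : List Y) (y : Y) :
    pathLoss π (l ++ [y]) = pathLoss π l + logloss (π l) y := by
  rw [pathLoss, pathLoss, List.length_append, List.length_singleton, Finset.sum_range_succ]
  congr 1
  · refine Finset.sum_congr rfl fun s hs => ?_
    have hs' := Finset.mem_range.1 hs
    rw [List.take_append_of_le_length hs'.le, List.getD_append _ _ _ _ hs']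
  · simp

noncomputable def nmlTree (N : List Y → ℝ≥0∞) (pre : List Y) : Simplex Y :=
  Simplex.normalize fun y => N (pre ++ [y])

lemma pathLoss_nmlTree_add_log {N : List Y → ℝ≥0∞} {r : ℕ}
    (hsum : ∀ pre : List Y, pre.length < r → ∑ y, N (pre ++ [y]) = N pre)
    (hfin : ∀ pre, N pre ≠ ⊤) (hpos : ∀ pre : List Y, pre.length ≤ r → N pre ≠ 0) :
    ∀ pre : List Y, pre.length ≤ r →
      pathLoss (nmlTree N) pre + ENNReal.log (N pre) = ENNReal.log (N []) := by
  intro pre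
  induction pre using List.reverseRecOn with
  | nil => simp
  | append_singleton pre y ih =>
    intro hlen
    have hlt : pre.length < r := by
      simp only [List.length_append, List.length_singleton] at hlen
      omega
    have hfin' : ∑ z, N (pre ++ [z]) ≠ ⊤ := hsum pre hlt ▸ hfin pre
    rw [pathLoss_concat, add_assoc, nmlTree,
      logloss_normalize_add_log (A := fun z => N (pre ++ [z])) (hpos _ hlen) hfin', hsum pre hlt,
      ih hlt.le]

noncomputable def dualPayoff (F : Set (Expert X Y)) (r : ℕ) (xs : List X) (ys : List Y)
    (χ : List Y → X) (π : List Y → Simplex Y) (suf : List Y) : EReal :=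
  (∑ s ∈ Finset.range r, logloss (π (suf.take s)) (suf.getD s default)) -
    ⨅ f : F, cumLoss (f : Expert X Y) (xs ++ treePath χ suf) (ys ++ suf)

lemma dualValToGo_eq_iSup (F : Set (Expert X Y)) (r : ℕ) (xs : List X) (ys : List Y) :
    dualValToGo F r xs ys = ⨆ χ, ⨆ π, expTree π (dualPayoff F r xs ys χ π) r [] := rfl

section Payoff

variable {F : Set (Expert X Y)} {r : ℕ} {xs : List X} {ys : List Y}

lemma dualPayoff_of_length (χ : List Y → X) (π : List Y → Simplex Y) {suf : List Y}
    (h : suf.length = r) :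
    dualPayoff F r xs ys χ π suf
      = pathLoss π suf + ENNReal.log (shtarkovMass F χ xs ys 0 suf) := by
  rw [dualPayoff, sub_iInf_cumLoss, ← h]
  rfl

lemma expTree_dualPayoff_le (χ : List Y → X) (π : List Y → Simplex Y) :
    ∀ (k : ℕ) (pre : List Y), pre.length + k = r →
      expTree π (dualPayoff F r xs ys χ π) k pre
        ≤ pathLoss π pre + ENNReal.log (shtarkovMass F χ xs ys k pre)
  | 0, pre, h => (dualPayoff_of_length χ π h).le
  | k + 1, pre, h => by
    calc expTree π (dualPayoff F r xs ys χ π) (k + 1) pre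
        = ∑ y, ((π pre).1 y : EReal)
            * expTree π (dualPayoff F r xs ys χ π) k (pre ++ [y]) := rfl
      _ ≤ ∑ y, ((π pre).1 y : EReal) * (pathLoss π pre + logloss (π pre) y
            + ENNReal.log (shtarkovMass F χ xs ys k (pre ++ [y]))) := by
          refine Finset.sum_le_sum fun y _ => mul_le_mul_of_nonneg_left ?_
            (EReal.coe_nonneg.2 ((π pre).2.1 y))
          rw [← pathLoss_concat]
          exact expTree_dualPayoff_le χ π k _
            (by simp only [List.length_append, List.length_singleton]; omega)
      _ ≤ pathLoss π pre + ENNReal.log (shtarkovMass F χ xs ys (k + 1) pre) :=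
          sum_mul_add_logloss_add_log_le (π pre) _ _

lemma dualValToGo_le_iSup_log_shtarkovMass :
    dualValToGo F r xs ys ≤ ⨆ χ, ENNReal.log (shtarkovMass F χ xs ys r []) := by
  rw [dualValToGo_eq_iSup]
  exact iSup_le fun χ => iSup_le fun π => le_iSup_of_le χ <| by
    simpa using expTree_dualPayoff_le χ π r [] (by simp)

lemma log_shtarkovMass_le_dualValToGo (χ : List Y → X)
    (hpos : ∀ l : List Y, l.length = r → maxLik F (xs ++ treePath χ l) (ys ++ l) ≠ 0) :
    ENNReal.log (shtarkovMass F χ xs ys r []) ≤ dualValToGo F r xs ys := by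
  set N : List Y → ℝ≥0∞ := fun pre => shtarkovMass F χ xs ys (r - pre.length) pre
  have hsum : ∀ pre : List Y, pre.length < r → ∑ y, N (pre ++ [y]) = N pre := by
    intro pre h
    simp only [N, List.length_append, List.length_singleton]
    rw [show r - pre.length = r - (pre.length + 1) + 1 by omega]
    rfl
  have hN : ∀ pre : List Y, pre.length ≤ r → N pre ≠ 0 := fun pre h =>
    shtarkovMass_ne_zero F χ xs ys fun l hl => by
      simpa using hpos (pre ++ l) (by simp only [List.length_append]; omega)
  have hconst := pathLoss_nmlTree_add_log hsum (fun _ => shtarkovMass_ne_top F χ xs ys _ _) hN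
  rw [dualValToGo_eq_iSup]
  refine le_iSup_of_le χ (le_iSup_of_le (nmlTree N) (le_of_eq ?_))
  refine (expTree_eq_of_forall_length_eq _ _ r [] fun l hl => ?_).symm
  rw [List.nil_append, dualPayoff_of_length χ _ hl]
  simpa [N, hl] using hconst l hl.le

end Payoff

end Dual

theorem dualValToGo_le_valToGo_and_eq_general
    {X Y : Type*} [Fintype Y] [Inhabited Y] [Nonempty X]
    (F : Set (Expert X Y)) (T t : ℕ)
    (xs : List X) (ys : List Y) :
    dualValToGo F (T - t) xs ys ≤ valToGo F (T - t) xs ys 0 ∧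
    ((∀ (xs' : List X) (ys' : List Y), xs'.length = T - t → ys'.length = T - t →
        (⨅ f : F, cumLoss (f : Expert X Y) (xs ++ xs') (ys ++ ys')) < ⊤) →
      valToGo F (T - t) xs ys 0 = dualValToGo F (T - t) xs ys) := by
  set r := T - t
  have hG : valToGo F r xs ys 0 ≤ ⨆ χ, ENNReal.log (shtarkovMass F χ xs ys r []) := by
    simpa [← ENNReal.logOrderIso_apply, OrderIso.map_iSup] using
      valToGo_le_add_log_iSup_shtarkovMass F r xs ys 0
  have hW : ⨆ χ, ENNReal.log (shtarkovMass F χ xs ys r []) ≤ valToGo F r xs ys 0 :=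
    iSup_le fun χ => by simpa using add_log_shtarkovMass_le_valToGo F r χ xs ys 0
  have hdual := dualValToGo_le_iSup_log_shtarkovMass.trans hW
  refine ⟨hdual, fun hfin => le_antisymm (hG.trans (iSup_le fun χ => ?_)) hdual⟩
  refine log_shtarkovMass_le_dualValToGo χ fun l hl h0 => ?_
  have hlt := hfin (treePath χ l) l (by simp [treePath, hl]) hl
  simp [iInf_cumLoss_eq_neg_log_maxLik, h0] at hlt

/-- For every nonempty class `F`, every `t ∈ {0,…,T}` and all prefixes
`x_{1:t}`, `y_{1:t}`, the value-to-go dominates the dual value-to-go: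
`G(F, x_{1:t}, y_{1:t}) ≥ W(F, x_{1:t}, y_{1:t})`.  Moreover, if every continuation has
`inf_{f ∈ F} Σ_{s=1}^T ℓ(f(x_{1:s}, y_{1:s-1}), y_s) < ∞`, then
`G(F, x_{1:t}, y_{1:t}) = W(F, x_{1:t}, y_{1:t})`. -/
theorem dualValToGo_le_valToGo_and_eq
    {X Y : Type*} [Fintype Y] [Inhabited Y] [Nonempty X]
    (F : Set (Expert X Y)) (hF : F.Nonempty) (T t : ℕ) (ht : t ≤ T)
    (xs : List X) (ys : List Y) (hxs : xs.length = t) (hys : ys.length = t) :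
    dualValToGo F (T - t) xs ys ≤ valToGo F (T - t) xs ys 0 ∧
    ((∀ (xs' : List X) (ys' : List Y), xs'.length = T - t → ys'.length = T - t →
        (⨅ f : F, cumLoss (f : Expert X Y) (xs ++ xs') (ys ++ ys')) < ⊤) →
      valToGo F (T - t) xs ys 0 = dualValToGo F (T - t) xs ys) :=
  dualValToGo_le_valToGo_and_eq_general F T t xs ys
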